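/- Let $\epsilon > 0$ and let $0 < \delta < \epsilon/3$. Let $G$ be a finite simple graph on $n$ vertices with the property that every vertex set $T$ with $|T| \le \delta n$ spans at most $(1+\epsilon/3)|T|$ edges (i.e., the induced subgraph $G[T]$ has at most $(1+\epsilon/3)|T|$ edges). Then $\nu(G, \mathcal{C}_{\lfloor \delta n \rfloor}) \le \nu(G, \mathcal{C}_{\lceil 3/\epsilon \rceil}) + \epsilon$; that is, $N(G, \mathcal{C}_{\lfloor \delta n\rfloor}) \le N(G, \mathcal{C}_{\lceil 3/\epsilon \rceil}) + \epsilon n$. -/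

import Mathlib

/-!
Take `S` realising `N(G, 𝒞_{⌊δn⌋})`. Every component `C` of `G[S]` has at most `δn` vertices,
so its cyclomatic number `e(C) - |C| + 1` is at most `ε|C|/3 + 1`. A connected `C` can be cut
into pieces of at most `b` vertices by deleting at most `|C|/(b+1) + e(C) - |C| + 1` vertices:
there is a vertex `u` such that all components of `C - u` but one, `R`, have at most `b`
vertices, and either `R` misses at least `b + 1` vertices of `C` or `u` has two neighbours in
`R`, which closes a cycle; delete `u` and recurse into `R`. For `b = ⌈3/ε⌉` and `|C| > b` this
is at most `ε|C|`, and the rest of `S` is a set inducing a graph in `𝒞_b`.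
-/

open SimpleGraph

/-- `N(G, 𝒞_k)`: the largest size of a vertex set `S` such that every connected component
of the induced subgraph `G[S]` has at most `k` vertices. -/
noncomputable def NC {V : Type*} [Fintype V] (G : SimpleGraph V) (k : ℕ) : ℕ :=
  sSup {m | ∃ S : Set V, m = S.ncard ∧
    ∀ v : S, (((G.induce S).connectedComponentMk v).supp).ncard ≤ k}

namespace SimpleGraph

variable {V : Type*} (G : SimpleGraph V)

def ReachableIn (A : Set V) (u v : V) : Prop := ∃ p : G.Walk u v, ∀ x ∈ p.support, x ∈ A

/-- Empty when `v ∉ A`. -/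
def componentIn (A : Set V) (v : V) : Set V := {w | G.ReachableIn A v w}

def PreconnectedOn (A : Set V) : Prop := ∀ ⦃x⦄, x ∈ A → ∀ ⦃y⦄, y ∈ A → G.ReachableIn A x y

def edgesIn (A : Set V) : Set (Sym2 V) := {e | e ∈ G.edgeSet ∧ ∀ x ∈ e, x ∈ A}

/-- `G[A] ∈ 𝒞_b`. -/
def ComponentsAtMost (b : ℕ) (A : Set V) : Prop := ∀ x ∈ A, (G.componentIn A x).ncard ≤ b

variable {G} {A B X : Set V} {u v w x y : V}

namespace ReachableIn

lemma refl (hv : v ∈ A) : G.ReachableIn A v v := ⟨.nil, by simpa using hv⟩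

lemma symm (h : G.ReachableIn A u v) : G.ReachableIn A v u :=
  let ⟨p, hp⟩ := h; ⟨p.reverse, by simpa using hp⟩

lemma trans (h : G.ReachableIn A u v) (h' : G.ReachableIn A v w) : G.ReachableIn A u w := by
  obtain ⟨p, hp⟩ := h
  obtain ⟨q, hq⟩ := h'
  exact ⟨p.append q, by simpa [Walk.mem_support_append_iff, or_imp, forall_and] using ⟨hp, hq⟩⟩

lemma mono (hAB : A ⊆ B) (h : G.ReachableIn A u v) : G.ReachableIn B u v :=
  let ⟨p, hp⟩ := h; ⟨p, fun x hx => hAB (hp x hx)⟩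

lemma right_mem (h : G.ReachableIn A u v) : v ∈ A :=
  let ⟨p, hp⟩ := h; hp v p.end_mem_support

lemma of_adj (hu : u ∈ A) (hv : v ∈ A) (h : G.Adj u v) : G.ReachableIn A u v :=
  ⟨.cons h .nil, by simp [hu, hv]⟩

end ReachableIn

lemma reachable_induce_iff (hu : u ∈ A) (hv : v ∈ A) :
    (G.induce A).Reachable ⟨u, hu⟩ ⟨v, hv⟩ ↔ G.ReachableIn A u v := by
  refine ⟨fun ⟨p⟩ => ⟨(p.map (Embedding.induce A).toHom : G.Walk u v), fun x hx => ?_⟩,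
    fun ⟨p, hp⟩ => ⟨p.induce A hp⟩⟩
  erw [Walk.support_map, List.mem_map] at hx
  obtain ⟨y, -, rfl⟩ := hx
  exact y.2

lemma mem_componentIn_self (hv : v ∈ A) : v ∈ G.componentIn A v := .refl hv

lemma componentIn_subset : G.componentIn A v ⊆ A := fun _ h => h.right_mem

lemma componentIn_mono (hAB : A ⊆ B) : G.componentIn A v ⊆ G.componentIn B v :=
  fun _ h => h.mono hAB

lemma componentIn_eq_of_mem (h : w ∈ G.componentIn A v) :
    G.componentIn A w = G.componentIn A v :=
  Set.ext fun _ => ⟨h.trans, h.symm.trans⟩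

lemma mem_componentIn_comm : w ∈ G.componentIn A v ↔ v ∈ G.componentIn A w :=
  ⟨.symm, .symm⟩

lemma Walk.support_subset_componentIn {p : G.Walk x y} (hp : ∀ z ∈ p.support, z ∈ A) :
    ∀ z ∈ p.support, z ∈ G.componentIn A x := by
  classical
  intro z hz
  exact ⟨p.takeUntil z hz, fun t ht => hp t (p.support_takeUntil_subset_support hz ht)⟩

lemma preconnectedOn_componentIn : G.PreconnectedOn (G.componentIn A v) := by
  intro x hx y hy
  obtain ⟨p, hp⟩ := hx.symm.trans hy
  refine ⟨p, fun z hz => ?_⟩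
  rw [← componentIn_eq_of_mem hx]
  exact Walk.support_subset_componentIn hp z hz

lemma componentIn_sdiff_subset :
    G.componentIn (A \ X) x ⊆ G.componentIn (G.componentIn A x \ X) x := by
  rintro y ⟨p, hp⟩
  have hpA := Walk.support_subset_componentIn (A := A) (fun z hz => (hp z hz).1)
  exact ⟨p, fun z hz => ⟨hpA z hz, (hp z hz).2⟩⟩

lemma componentIn_sdiff_eq (h : Disjoint (G.componentIn A x) X) :
    G.componentIn (A \ X) x = G.componentIn A x := by
  refine (componentIn_mono Set.sdiff_subset).antisymm fun y ⟨p, hp⟩ => ⟨p, fun z hz => ?_⟩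
  have hz := Walk.support_subset_componentIn hp z hz
  exact ⟨componentIn_subset hz, h.notMem_of_mem_left hz⟩

lemma exists_adj_mem_componentIn_of_walk (p : G.Walk y u) (hp : ∀ z ∈ p.support, z ∈ A)
    (hyu : y ≠ u) : ∃ z, G.Adj u z ∧ z ∈ G.componentIn (A \ {u}) y := by
  induction p with
  | nil => exact absurd rfl hyu
  | @cons a a₁ b h rest ih =>
    have ha : a ∈ A \ {b} := ⟨hp a (by simp), hyu⟩
    by_cases h1 : a₁ = b
    · exact ⟨a, h1 ▸ h.symm, mem_componentIn_self ha⟩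
    · obtain ⟨z, hz, hr⟩ := ih (fun x hx => hp x (by simp [hx])) h1
      exact ⟨z, hz, (ReachableIn.of_adj ha ⟨hp a₁ (by simp), h1⟩ h).trans hr⟩

lemma PreconnectedOn.exists_adj_mem_componentIn (hA : G.PreconnectedOn A) (hu : u ∈ A)
    (hy : y ∈ A \ {u}) : ∃ z, G.Adj u z ∧ z ∈ G.componentIn (A \ {u}) y :=
  let ⟨p, hp⟩ := hA hy.1 hu
  exists_adj_mem_componentIn_of_walk p hp hy.2

lemma ncard_edgeSet_induce : (G.induce A).edgeSet.ncard = (G.edgesIn A).ncard := by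
  have himg : Sym2.map (↑) '' (G.induce A).edgeSet = G.edgesIn A := by
    ext e
    induction e using Sym2.ind with
    | _ x y =>
      constructor
      · rintro ⟨e', he', hxy⟩
        induction e' using Sym2.ind with
        | _ a b =>
          rw [Sym2.map_mk, Sym2.eq_iff] at hxy
          rcases hxy with ⟨rfl, rfl⟩ | ⟨rfl, rfl⟩
          · exact ⟨he', by simp⟩
          · exact ⟨(G.mem_edgeSet.2 he').symm, by simp⟩
      · rintro ⟨hxy, hends⟩
        exact ⟨s(⟨x, hends x (by simp)⟩, ⟨y, hends y (by simp)⟩), hxy, rfl⟩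
  rw [← himg, Set.ncard_image_of_injective _ (Sym2.map.injective Subtype.val_injective)]

lemma PreconnectedOn.ncard_le_ncard_edgesIn_add_one [Finite V] (hA : G.PreconnectedOn A) :
    A.ncard ≤ (G.edgesIn A).ncard + 1 := by
  rcases A.eq_empty_or_nonempty with rfl | ⟨v, hv⟩
  · simp
  have : Nonempty A := ⟨⟨v, hv⟩⟩
  have hconn : (G.induce A).Connected :=
    ⟨fun ⟨x, hx⟩ ⟨y, hy⟩ => (reachable_induce_iff hx hy).2 (hA hx hy)⟩
  simpa [Nat.card_coe_set_eq, ncard_edgeSet_induce] using hconn.card_vert_le_card_edgeSet_add_one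

lemma ncard_edgesIn_add_ncard_edgesIn_sdiff_add_ncard_le [Finite V] (hXA : X ⊆ A)
    (hu : u ∈ A \ X) :
    (G.edgesIn X).ncard + (G.edgesIn (A \ X)).ncard + (G.neighborSet u ∩ X).ncard ≤
      (G.edgesIn A).ncard := by
  have hinside : Disjoint (G.edgesIn X) (G.edgesIn (A \ X)) := by
    refine Set.disjoint_left.2 fun e he he' => ?_
    exact (he'.2 _ e.out_fst_mem).2 (he.2 _ e.out_fst_mem)
  have hcross :
      Disjoint (G.edgesIn X ∪ G.edgesIn (A \ X)) ((s(u, ·)) '' (G.neighborSet u ∩ X)) := by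
    refine Set.disjoint_right.2 ?_
    rintro _ ⟨w, ⟨-, hw⟩, rfl⟩ (⟨-, h⟩ | ⟨-, h⟩)
    · exact hu.2 (h u (Sym2.mem_mk_left u w))
    · exact (h w (Sym2.mem_mk_right u w)).2 hw
  have hsub :
      G.edgesIn X ∪ G.edgesIn (A \ X) ∪ (s(u, ·)) '' (G.neighborSet u ∩ X) ⊆ G.edgesIn A := by
    refine Set.union_subset (Set.union_subset (fun e he => ⟨he.1, fun x hx => hXA (he.2 x hx)⟩)
      (fun e he => ⟨he.1, fun x hx => (he.2 x hx).1⟩)) ?_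
    rintro _ ⟨w, ⟨huw, hw⟩, rfl⟩
    refine ⟨huw, fun x hx => ?_⟩
    rcases Sym2.mem_iff.1 hx with rfl | rfl
    exacts [hu.1, hXA hw]
  have := Set.ncard_le_ncard hsub
  rwa [Set.ncard_union_eq hcross, Set.ncard_union_eq hinside,
    Set.ncard_image_of_injective (f := (s(u, ·))) _ (Sym2.mkEmbedding u).injective] at this

lemma disjoint_componentIn (h : x ∉ G.componentIn A v) :
    Disjoint (G.componentIn A x) (G.componentIn A v) :=
  Set.disjoint_left.2 fun _ hx hv =>
    h (componentIn_eq_of_mem hv ▸ mem_componentIn_comm.1 hx)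

variable {C : Set V}

lemma PreconnectedOn.sdiff_componentIn (hC : G.PreconnectedOn C) (hu : u ∈ C) :
    G.PreconnectedOn (C \ G.componentIn (C \ {u}) v) := by
  set R := G.componentIn (C \ {u}) v
  have huR : u ∈ C \ R := ⟨hu, fun h => (componentIn_subset h).2 rfl⟩
  have hreach : ∀ x ∈ C \ R, G.ReachableIn (C \ R) x u := by
    rintro x ⟨hxC, hxR⟩
    by_cases hxu : x = u
    · subst hxu
      exact .refl huR
    obtain ⟨z, huz, hz⟩ := hC.exists_adj_mem_componentIn hu ⟨hxC, hxu⟩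
    rw [← componentIn_sdiff_eq (disjoint_componentIn hxR), Set.sdiff_sdiff_comm] at hz
    exact (hz.mono Set.sdiff_subset).trans (.of_adj hz.right_mem.1 huR huz.symm)
  exact fun x hx y hy => (hreach x hx).trans (hreach y hy).symm

lemma PreconnectedOn.ncard_edgesIn_componentIn_add_le [Finite V] (hC : G.PreconnectedOn C)
    (hu : u ∈ C) :
    (G.edgesIn (G.componentIn (C \ {u}) v)).ncard + C.ncard +
        (G.neighborSet u ∩ G.componentIn (C \ {u}) v).ncard ≤
      (G.edgesIn C).ncard + (G.componentIn (C \ {u}) v).ncard + 1 := by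
  have hrest := (hC.sdiff_componentIn (v := v) hu).ncard_le_ncard_edgesIn_add_one
  set R := G.componentIn (C \ {u}) v
  have hRC : R ⊆ C := componentIn_subset.trans Set.sdiff_subset
  have hsplit := ncard_edgesIn_add_ncard_edgesIn_sdiff_add_ncard_le (G := G) hRC
    ⟨hu, fun h => (componentIn_subset h).2 rfl⟩
  have hcard := Set.ncard_sdiff_add_ncard_of_subset hRC
  omega

/-- The components of `C - u` avoiding the neighbour `v` of `u` lie in the component of
`C - v` containing `u`, and miss `u`. -/
lemma PreconnectedOn.ncard_componentIn_lt_of_adj [Finite V] (hC : G.PreconnectedOn C)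
    (huv : G.Adj u v) (hu : u ∈ C) (hx : x ∈ C \ {u})
    (hxv : x ∉ G.componentIn (C \ {u}) v) :
    (G.componentIn (C \ {u}) x).ncard < (G.componentIn (C \ {v}) u).ncard := by
  have hvx : v ∉ G.componentIn (C \ {u}) x := fun h => hxv (mem_componentIn_comm.1 h)
  have hx' := componentIn_sdiff_eq (Set.disjoint_singleton_right.2 hvx)
  obtain ⟨z, huz, hz⟩ := hC.exists_adj_mem_componentIn hu hx
  rw [← hx'] at hz
  have hzC : z ∈ C \ {v} := ⟨hz.right_mem.1.1, hz.right_mem.2⟩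
  have hux : G.ReachableIn (C \ {v}) u x :=
    (ReachableIn.of_adj (A := C \ {v}) ⟨hu, huv.ne⟩ hzC huz).trans
      (hz.symm.mono (Set.sdiff_subset_sdiff_left Set.sdiff_subset))
  have hsub : G.componentIn (C \ {u}) x ⊆ G.componentIn (C \ {v}) u := by
    rw [← hx']
    exact fun y hy => hux.trans (hy.mono (Set.sdiff_subset_sdiff_left Set.sdiff_subset))
  exact Set.ncard_lt_ncard ⟨hsub, fun h => (componentIn_subset
    (h (mem_componentIn_self ⟨hu, huv.ne⟩))).2 rfl⟩

lemma disjoint_or_exists_adj :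
    Disjoint (G.componentIn (C \ {u}) v) (G.componentIn (C \ {v}) u) ∨
      ∃ w ∈ G.componentIn (C \ {u}) v, w ≠ v ∧ G.Adj u w := by
  refine (Set.disjoint_or_nonempty_inter _ _).imp_right fun ⟨y, hyv, ⟨p, hp⟩⟩ => ?_
  obtain ⟨z, huz, hz⟩ := exists_adj_mem_componentIn_of_walk p.reverse
    (fun z hz => hp z (by simpa using hz))
    (componentIn_subset hyv).2
  exact ⟨z, hyv.trans (hz.mono (Set.sdiff_subset_sdiff_left Set.sdiff_subset)),
    hz.right_mem.1.2, huz⟩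

lemma componentsAtMost_of_ncard_le [Finite V] {b : ℕ} (h : A.ncard ≤ b) :
    G.ComponentsAtMost b A :=
  fun _ _ => (Set.ncard_le_ncard componentIn_subset).trans h

lemma componentsAtMost_sdiff_of_componentIn [Finite V] {b : ℕ}
    (hv : G.ComponentsAtMost b (G.componentIn A v \ X))
    (hothers : ∀ x ∈ A, x ∉ G.componentIn A v → (G.componentIn A x).ncard ≤ b) :
    G.ComponentsAtMost b (A \ X) := by
  intro x hx
  refine (Set.ncard_le_ncard componentIn_sdiff_subset).trans ?_
  by_cases hxv : x ∈ G.componentIn A v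
  · rw [componentIn_eq_of_mem hxv]
    exact hv x ⟨hxv, hx.2⟩
  · exact (Set.ncard_le_ncard (componentIn_subset.trans Set.sdiff_subset)).trans
      (hothers x hx.1 hxv)

/-- Choose `v` and a component `K` of `C - v` that is as small as possible among those with more
than `b` vertices, and let `u ∈ K` be a neighbour of `v`. All components of `C - u` other than
the one of `v` are smaller than `K`; the one of `v` is either disjoint from `K` or contains a
second neighbour of `u`. -/
lemma PreconnectedOn.exists_pivot [Finite V] {b : ℕ} (hC : G.PreconnectedOn C)
    (hbig : ∃ v ∈ C, ∃ x ∈ C \ {v}, b < (G.componentIn (C \ {v}) x).ncard) :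
    ∃ u ∈ C, ∃ v ∈ C \ {u}, G.Adj u v ∧
      (∀ x ∈ C \ {u}, x ∉ G.componentIn (C \ {u}) v → (G.componentIn (C \ {u}) x).ncard ≤ b) ∧
      ((G.componentIn (C \ {u}) v).ncard + (b + 1) ≤ C.ncard ∨
        ∃ w ∈ G.componentIn (C \ {u}) v, w ≠ v ∧ G.Adj u w) := by
  classical
  have hm : ∃ m, ∃ v ∈ C, ∃ x ∈ C \ {v}, b < m ∧ (G.componentIn (C \ {v}) x).ncard = m :=
    let ⟨v, hv, x, hx, h⟩ := hbig; ⟨_, v, hv, x, hx, h, rfl⟩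
  obtain ⟨v, hv, x, hx, hbK, hK⟩ := Nat.find_spec hm
  have hmin : ∀ v' ∈ C, ∀ x' ∈ C \ {v'}, b < (G.componentIn (C \ {v'}) x').ncard →
      Nat.find hm ≤ (G.componentIn (C \ {v'}) x').ncard :=
    fun v' hv' x' hx' h => Nat.find_min' hm ⟨v', hv', x', hx', h, rfl⟩
  obtain ⟨u, hvu, hu⟩ := hC.exists_adj_mem_componentIn hv hx
  rw [← componentIn_eq_of_mem hu] at hK
  have huC : u ∈ C \ {v} := componentIn_subset hu
  refine ⟨u, huC.1, v, ⟨hv, hvu.ne⟩, hvu.symm, fun y hy hyv => ?_, ?_⟩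
  · by_contra! hy'
    have := hC.ncard_componentIn_lt_of_adj hvu.symm huC.1 hy hyv
    have := hmin u huC.1 y hy hy'
    omega
  · refine (disjoint_or_exists_adj (C := C)).imp_left fun hdisj => ?_
    have hsub : G.componentIn (C \ {u}) v ∪ G.componentIn (C \ {v}) u ⊆ C :=
      Set.union_subset (componentIn_subset.trans Set.sdiff_subset)
        (componentIn_subset.trans Set.sdiff_subset)
    have := Set.ncard_le_ncard hsub
    rw [Set.ncard_union_eq hdisj] at this
    omega

/-- The bound reads `|D| ≤ |C| / (b + 1) + (e(C) + 1 - |C|)`, cleared of division and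
subtraction. -/
theorem PreconnectedOn.exists_cut [Finite V] (b : ℕ) (hC : G.PreconnectedOn C) :
    ∃ D ⊆ C, G.ComponentsAtMost b (C \ D) ∧
      (b + 1) * D.ncard + (b + 1) * C.ncard ≤ C.ncard + (b + 1) * ((G.edgesIn C).ncard + 1) := by
  induction hn : C.ncard using Nat.strong_induction_on generalizing C with
  | _ n ih =>
  subst hn
  have hCe := hC.ncard_le_ncard_edgesIn_add_one
  have hCe' := Nat.mul_le_mul_left (b + 1) hCe
  by_cases hsmall : C.ncard ≤ b
  · refine ⟨∅, Set.empty_subset _,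
      componentsAtMost_of_ncard_le ((Set.ncard_le_ncard Set.sdiff_subset).trans hsmall), ?_⟩
    rw [Set.ncard_empty, mul_zero, zero_add]
    exact hCe'.trans (Nat.le_add_left _ _)
  by_cases hbig : ∃ v ∈ C, ∃ x ∈ C \ {v}, b < (G.componentIn (C \ {v}) x).ncard
  · obtain ⟨u, hu, v, hv, huv, hothers, hR⟩ := hC.exists_pivot hbig
    set R := G.componentIn (C \ {u}) v
    have hRC : R ⊆ C \ {u} := componentIn_subset
    obtain ⟨DR, hDR, hDRcomp, hDRcard⟩ := ih R.ncard
      (Set.ncard_lt_ncard ⟨hRC.trans Set.sdiff_subset, fun h => (hRC (h hu)).2 rfl⟩)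
      preconnectedOn_componentIn rfl
    refine ⟨insert u DR, Set.insert_subset hu (hDR.trans (hRC.trans Set.sdiff_subset)), ?_, ?_⟩
    · rw [← Set.singleton_union, ← Set.sdiff_sdiff]
      exact componentsAtMost_sdiff_of_componentIn hDRcomp hothers
    · have hedges := hC.ncard_edgesIn_componentIn_add_le (v := v) hu
      have hedges' := Nat.mul_le_mul_left (b + 1) hedges
      have hD := Set.ncard_insert_le u DR
      have hD' := Nat.mul_le_mul_left (b + 1) hD
      have hN : R.ncard + 2 * (b + 1) ≤ C.ncard + (b + 1) * (G.neighborSet u ∩ R).ncard := by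
        rcases hR with hR | ⟨w, hwR, hwv, huw⟩
        · have : 1 ≤ (G.neighborSet u ∩ R).ncard :=
            (Set.ncard_pos).2 ⟨v, huv, mem_componentIn_self hv⟩
          nlinarith
        · have : 2 ≤ (G.neighborSet u ∩ R).ncard :=
            (Set.one_lt_ncard).2 ⟨w, ⟨huw, hwR⟩, v, ⟨huv, mem_componentIn_self hv⟩, hwv⟩
          have := Set.ncard_le_ncard (hRC.trans Set.sdiff_subset)
          nlinarith
      nlinarith
  · push Not at hbig
    obtain ⟨u, hu⟩ : C.Nonempty := Set.nonempty_of_ncard_ne_zero (by omega)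
    refine ⟨{u}, Set.singleton_subset_iff.2 hu, hbig u hu, ?_⟩
    rw [Set.ncard_singleton]
    nlinarith

theorem PreconnectedOn.exists_cut_of_sparse [Finite V] {b : ℕ} {ε : ℝ} (hb : 3 ≤ ε * (b + 1))
    (hC : G.PreconnectedOn C) (hsparse : ((G.edgesIn C).ncard : ℝ) ≤ (1 + ε / 3) * C.ncard) :
    ∃ D ⊆ C, G.ComponentsAtMost b (C \ D) ∧ (D.ncard : ℝ) ≤ ε * C.ncard := by
  have hε : 0 < ε := by
    by_contra! h
    nlinarith [(b.cast_nonneg : (0 : ℝ) ≤ b)]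
  by_cases hsmall : C.ncard ≤ b
  · refine ⟨∅, Set.empty_subset _,
      componentsAtMost_of_ncard_le ((Set.ncard_le_ncard Set.sdiff_subset).trans hsmall), ?_⟩
    rw [Set.ncard_empty, Nat.cast_zero]
    positivity
  obtain ⟨D, hDC, hD, hcard⟩ := hC.exists_cut b
  refine ⟨D, hDC, hD, ?_⟩
  have hcard' : ((b : ℝ) + 1) * D.ncard + (b + 1) * C.ncard ≤
      C.ncard + (b + 1) * ((G.edgesIn C).ncard + 1) := by
    exact_mod_cast hcard
  have hbC : (b : ℝ) + 1 ≤ C.ncard := by exact_mod_cast Nat.lt_of_not_le hsmall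
  have key : ((b : ℝ) + 1) * D.ncard ≤ ((b : ℝ) + 1) * (ε * C.ncard) := by
    nlinarith [mul_le_mul_of_nonneg_right hb (C.ncard.cast_nonneg : (0 : ℝ) ≤ C.ncard)]
  exact le_of_mul_le_mul_left key (by positivity)

theorem exists_cut_of_forall_componentIn [Finite V] {b : ℕ} {c : ℝ} (S : Set V)
    (h : ∀ x ∈ S, ∃ D ⊆ G.componentIn S x, G.ComponentsAtMost b (G.componentIn S x \ D) ∧
      (D.ncard : ℝ) ≤ c * (G.componentIn S x).ncard) :
    ∃ D ⊆ S, G.ComponentsAtMost b (S \ D) ∧ (D.ncard : ℝ) ≤ c * S.ncard := by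
  induction hn : S.ncard using Nat.strong_induction_on generalizing S with
  | _ n ih =>
  subst hn
  rcases S.eq_empty_or_nonempty with rfl | ⟨x, hx⟩
  · exact ⟨∅, Set.empty_subset _, fun _ h => h.1.elim, by simp⟩
  set C := G.componentIn S x
  obtain ⟨DC, hDC, hDCcomp, hDCcard⟩ := h x hx
  have hCS : C ⊆ S := componentIn_subset
  have hrest : ∀ y ∈ S \ C, G.componentIn (S \ C) y = G.componentIn S y :=
    fun y hy => componentIn_sdiff_eq (disjoint_componentIn hy.2)
  obtain ⟨D', hD'S, hD'comp, hD'card⟩ := ih _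
    (Set.ncard_lt_ncard ⟨Set.sdiff_subset, fun h => (h hx).2 (mem_componentIn_self hx)⟩)
    (S \ C) (fun y hy => hrest y hy ▸ h y hy.1) rfl
  refine ⟨DC ∪ D', Set.union_subset (hDC.trans hCS) (hD'S.trans Set.sdiff_subset),
    fun y hy => (Set.ncard_le_ncard componentIn_sdiff_subset).trans ?_, ?_⟩
  · by_cases hyC : y ∈ C
    · rw [componentIn_eq_of_mem hyC]
      exact (Set.ncard_le_ncard (componentIn_mono (Set.sdiff_subset_sdiff_right
        Set.subset_union_left))).trans (hDCcomp y ⟨hyC, fun h => hy.2 (Or.inl h)⟩)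
    · rw [← hrest y ⟨hy.1, hyC⟩]
      exact (Set.ncard_le_ncard (componentIn_mono (Set.sdiff_subset_sdiff componentIn_subset
        Set.subset_union_right))).trans (hD'comp y ⟨⟨hy.1, hyC⟩, fun h => hy.2 (Or.inr h)⟩)
  · have hS : ((S \ C).ncard : ℝ) + C.ncard = S.ncard := by
      exact_mod_cast Set.ncard_sdiff_add_ncard_of_subset hCS
    have hD : ((DC ∪ D').ncard : ℝ) ≤ DC.ncard + D'.ncard := by
      exact_mod_cast Set.ncard_union_le DC D'
    rw [← hS]
    linarith

lemma ncard_supp_connectedComponentMk_induce (hv : v ∈ A) :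
    ((G.induce A).connectedComponentMk ⟨v, hv⟩).supp.ncard = (G.componentIn A v).ncard := by
  have himg : (↑) '' ((G.induce A).connectedComponentMk ⟨v, hv⟩).supp = G.componentIn A v := by
    ext x
    simp only [Set.mem_image, ConnectedComponent.mem_supp_iff, ConnectedComponent.eq]
    constructor
    · rintro ⟨⟨x, hx⟩, hxv, rfl⟩
      exact ((reachable_induce_iff hx hv).1 hxv).symm
    · intro hx
      exact ⟨⟨x, hx.right_mem⟩, (reachable_induce_iff _ hv).2 hx.symm, rfl⟩
  rw [← himg, Set.ncard_image_of_injective _ Subtype.val_injective]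

lemma componentsAtMost_iff {k : ℕ} : G.ComponentsAtMost k A ↔
    ∀ v : A, ((G.induce A).connectedComponentMk v).supp.ncard ≤ k := by
  simp only [ComponentsAtMost, Subtype.forall, ncard_supp_connectedComponentMk_induce]

end SimpleGraph

lemma bddAbove_setOf_ncard {V : Type*} [Finite V] (P : Set V → Prop) :
    BddAbove {m | ∃ S : Set V, m = S.ncard ∧ P S} :=
  ⟨Nat.card V, by rintro _ ⟨S, rfl, -⟩; exact Set.ncard_le_card S⟩

lemma exists_componentsAtMost_ncard_eq_NC {V : Type*} [Fintype V] (G : SimpleGraph V) (k : ℕ) :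
    ∃ S : Set V, NC G k = S.ncard ∧ G.ComponentsAtMost k S := by
  obtain ⟨S, hS, hcomp⟩ : NC G k ∈ {m | ∃ S : Set V, m = S.ncard ∧
      ∀ v : S, ((G.induce S).connectedComponentMk v).supp.ncard ≤ k} :=
    Nat.sSup_mem ⟨0, ∅, by simp, fun v => v.2.elim⟩ (bddAbove_setOf_ncard _)
  exact ⟨S, hS, componentsAtMost_iff.2 hcomp⟩

lemma ncard_le_NC {V : Type*} [Fintype V] {G : SimpleGraph V} {k : ℕ} {S : Set V}
    (h : G.ComponentsAtMost k S) : S.ncard ≤ NC G k :=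
  le_csSup (bddAbove_setOf_ncard _) ⟨S, rfl, componentsAtMost_iff.1 h⟩

theorem fragment_from_sparse_general {V : Type*} [Fintype V] (G : SimpleGraph V)
    (n : ℕ) (hn : n = Fintype.card V) (ε δ : ℝ) (hε : 0 < ε) (hδ : 0 < δ)
    (hG : ∀ T : Set V, (T.ncard : ℝ) ≤ δ * n →
      ((G.induce T).edgeSet.ncard : ℝ) ≤ (1 + ε / 3) * T.ncard) :
    (NC G ⌊δ * n⌋₊ : ℝ) ≤ NC G ⌈(3 : ℝ) / ε⌉₊ + ε * n := by
  obtain ⟨S, hNS, hS⟩ := exists_componentsAtMost_ncard_eq_NC G ⌊δ * n⌋₊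
  have hb : 3 ≤ ε * (⌈(3 : ℝ) / ε⌉₊ + 1) := by
    have := Nat.le_ceil (3 / ε)
    rw [div_le_iff₀ hε] at this
    nlinarith
  have hsparse : ∀ x ∈ S, ((G.edgesIn (G.componentIn S x)).ncard : ℝ) ≤
      (1 + ε / 3) * (G.componentIn S x).ncard := fun x hx => by
    rw [← ncard_edgeSet_induce]
    exact hG _ ((Nat.cast_le.2 (hS x hx)).trans (Nat.floor_le (by positivity)))
  obtain ⟨D, -, hD, hDS⟩ := G.exists_cut_of_forall_componentIn S fun x hx =>
    preconnectedOn_componentIn.exists_cut_of_sparse hb (hsparse x hx)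
  have hSD : (S.ncard : ℝ) ≤ (S \ D).ncard + D.ncard := by
    exact_mod_cast Set.ncard_le_ncard_sdiff_add_ncard S D
  have hSn : (S.ncard : ℝ) ≤ n := by
    rw [hn, ← Nat.card_eq_fintype_card]
    exact_mod_cast Set.ncard_le_card S
  have hNC : ((S \ D).ncard : ℝ) ≤ NC G ⌈(3 : ℝ) / ε⌉₊ := by exact_mod_cast ncard_le_NC hD
  rw [hNS]
  nlinarith

/-- Let `ε > 0` and `0 < δ < ε/3`. If `G` is a graph on `n` vertices in
which every vertex set `T` with `|T| ≤ δ n` spans at most `(1 + ε/3)|T|` edges, then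
`N(G, 𝒞_{⌊δn⌋}) ≤ N(G, 𝒞_{⌈3/ε⌉}) + ε n`. -/
theorem fragment_from_sparse {V : Type*} [Fintype V] (G : SimpleGraph V)
    (n : ℕ) (hn : n = Fintype.card V) (ε δ : ℝ) (hε : 0 < ε) (hδ : 0 < δ)
    (hδε : δ < ε / 3)
    (hG : ∀ T : Set V, (T.ncard : ℝ) ≤ δ * n →
      ((G.induce T).edgeSet.ncard : ℝ) ≤ (1 + ε / 3) * T.ncard) :
    (NC G ⌊δ * n⌋₊ : ℝ) ≤ NC G ⌈(3 : ℝ) / ε⌉₊ + ε * n :=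
  fragment_from_sparse_general G n hn ε δ hε hδ hG
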